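/- arXiv:2408.14893 — 2 statements merged into one kernel-verified Lean document; each statement's English description precedes it below -/
import Mathlib

section
/- Let (A0,A1) be a quasi-Banach couple. The following are equivalent: (a) there is a constant c>0 such that K(S(A0+A1),t,A0,A1) > c for all t>0; (b) for every pair of non-increasing sequences (ε_n), (t_n) of positive reals converging to 0, there exists x ∈ A0+A1 such that the sequence (K(x,t_n,A0,A1)) is not O(ε_n), i.e., there is no constant C>0 with K(x,t_n,A0,A1) ≤ Cε_n for all n. -/
open Filter Topology MeasureTheory ENNReal Set
open scoped Classical

noncomputable section

/-- A quasi-Banach space realized on a submodule of an ambient real vector space: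
a quasi-norm (with quasi-triangle constant `qc`) which is complete on the carrier. -/
structure QuasiNormedSpaceOn (V : Type*) [AddCommGroup V] [Module ℝ V] where
  carrier : Submodule ℝ V
  nrm : V → ℝ
  qc : ℝ
  one_le_qc : 1 ≤ qc
  nrm_nonneg : ∀ x : V, 0 ≤ nrm x
  nrm_eq_zero : ∀ x ∈ carrier, (nrm x = 0 ↔ x = 0)
  nrm_smul : ∀ (c : ℝ), ∀ x ∈ carrier, nrm (c • x) = |c| * nrm x
  quasi_triangle : ∀ x ∈ carrier, ∀ y ∈ carrier, nrm (x + y) ≤ qc * (nrm x + nrm y)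
  complete : ∀ f : ℕ → V, (∀ k, f k ∈ carrier) →
    (∀ ε : ℝ, 0 < ε → ∃ N : ℕ, ∀ m ≥ N, ∀ n ≥ N, nrm (f m - f n) < ε) →
    ∃ x ∈ carrier, Filter.Tendsto (fun k => nrm (f k - x)) Filter.atTop (nhds 0)

variable {V : Type*} [AddCommGroup V] [Module ℝ V]

/-- The sum `B0 + B1` of two subsets of the ambient space. -/
def sumSetG (B0 B1 : Set V) : Set V := {x | ∃ b0 ∈ B0, ∃ b1 ∈ B1, x = b0 + b1}

/-- Peetre's K-functional for a (generalized) couple given by sets `B0, B1`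
with quasi-norms `N0, N1`. -/
def Kgen (B0 B1 : Set V) (N0 N1 : V → ℝ) (t : ℝ) (x : V) : ℝ :=
  sInf {r : ℝ | ∃ b0 ∈ B0, ∃ b1 ∈ B1, x = b0 + b1 ∧ r = N0 b0 + t * N1 b1}

/-- Quasi-norm of the sum space. -/
def sumNormG (B0 B1 : Set V) (N0 N1 : V → ℝ) (x : V) : ℝ := Kgen B0 B1 N0 N1 1 x

/-- The set `A0 + A1` for a couple. -/
def csum (S0 S1 : QuasiNormedSpaceOn V) : Set V :=
  sumSetG (S0.carrier : Set V) (S1.carrier : Set V)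

/-- Peetre's K-functional `K(x, t, A0, A1)` of a couple. -/
def Kfun (S0 S1 : QuasiNormedSpaceOn V) (t : ℝ) (x : V) : ℝ :=
  Kgen (S0.carrier : Set V) (S1.carrier : Set V) S0.nrm S1.nrm t x

/-- The quasi-norm `‖x‖_{A0+A1} = K(x,1,A0,A1)`. -/
def sumNorm (S0 S1 : QuasiNormedSpaceOn V) (x : V) : ℝ := Kfun S0 S1 1 x

/-- The set `A0 ∩ A1`. -/
def cinter (S0 S1 : QuasiNormedSpaceOn V) : Set V :=
  (S0.carrier : Set V) ∩ (S1.carrier : Set V)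

/-- The quasi-norm `‖x‖_{A0∩A1} = max(‖x‖_{A0}, ‖x‖_{A1})`. -/
def interNorm (S0 S1 : QuasiNormedSpaceOn V) (x : V) : ℝ := max (S0.nrm x) (S1.nrm x)

/-- The unit sphere `S(A0+A1)`. -/
def sumSphere (S0 S1 : QuasiNormedSpaceOn V) : Set V :=
  {x | x ∈ csum S0 S1 ∧ sumNorm S0 S1 x = 1}

/-- `K(A, t, A0, A1) = sup_{a ∈ A} K(a, t, A0, A1)`. -/
def KSet (S0 S1 : QuasiNormedSpaceOn V) (t : ℝ) (A : Set V) : ℝ :=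
  sSup (Kfun S0 S1 t '' A)

/-- `(A0, A1)` is a quasi-Banach couple: both spaces are continuously embedded
in the (Hausdorff topological vector space) ambient space `V`. -/
structure IsQBCouple {V : Type*} [AddCommGroup V] [Module ℝ V] [TopologicalSpace V]
    [IsTopologicalAddGroup V] [ContinuousSMul ℝ V] [T2Space V]
    (S0 S1 : QuasiNormedSpaceOn V) : Prop where
  embed0 : ∀ f : ℕ → V, (∀ k, f k ∈ S0.carrier) →
    Filter.Tendsto (fun k => S0.nrm (f k)) Filter.atTop (nhds 0) →
    Filter.Tendsto f Filter.atTop (nhds (0 : V))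
  embed1 : ∀ f : ℕ → V, (∀ k, f k ∈ S1.carrier) →
    Filter.Tendsto (fun k => S1.nrm (f k)) Filter.atTop (nhds 0) →
    Filter.Tendsto f Filter.atTop (nhds (0 : V))

/-- `A` is not closed in `B` with respect to the quasi-norm `NB`:
some sequence in `A` converges (w.r.t. `NB`) to a point of `B` outside `A`. -/
def NotClosedIn (A B : Set V) (NB : V → ℝ) : Prop :=
  ∃ (f : ℕ → V) (x : V), (∀ k, f k ∈ A) ∧ x ∈ B ∧ x ∉ A ∧
    Filter.Tendsto (fun k => NB (f k - x)) Filter.atTop (nhds 0)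

/-- Membership in the real interpolation space `(B0, B1)_{θ,p}` (generalized couple).
For `p = ∞` it is the boundedness of `t^{-θ} K(x,t)`; for finite `p` finiteness of
`∫_0^∞ (t^{-θ}K(x,t))^p dt/t`. -/
def interpMemG (B0 B1 : Set V) (N0 N1 : V → ℝ) (θ : ℝ) (p : ℝ≥0∞) (x : V) : Prop :=
  x ∈ sumSetG B0 B1 ∧
    if p = ⊤ then ∃ M : ℝ, ∀ t : ℝ, 0 < t → t ^ (-θ) * Kgen B0 B1 N0 N1 t x ≤ M
    else (∫⁻ t in Set.Ioi (0:ℝ),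
        ENNReal.ofReal ((t ^ (-θ) * Kgen B0 B1 N0 N1 t x) ^ p.toReal / t)) < ⊤

/-- The quasi-norm of the real interpolation space `(B0, B1)_{θ,p}`. -/
def interpNormG (B0 B1 : Set V) (N0 N1 : V → ℝ) (θ : ℝ) (p : ℝ≥0∞) (x : V) : ℝ :=
  if p = ⊤ then sSup {r : ℝ | ∃ t : ℝ, 0 < t ∧ r = t ^ (-θ) * Kgen B0 B1 N0 N1 t x}
  else ((∫⁻ t in Set.Ioi (0:ℝ),
      ENNReal.ofReal ((t ^ (-θ) * Kgen B0 B1 N0 N1 t x) ^ p.toReal / t)) ^ (1 / p.toReal)).toReal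

/-- The real interpolation space as a set (generalized couple). -/
def interpSetG (B0 B1 : Set V) (N0 N1 : V → ℝ) (θ : ℝ) (p : ℝ≥0∞) : Set V :=
  {x | interpMemG B0 B1 N0 N1 θ p x}

/-- The real interpolation space `(A0, A1)_{θ,p}` of a couple, as a set. -/
def interpSet (S0 S1 : QuasiNormedSpaceOn V) (θ : ℝ) (p : ℝ≥0∞) : Set V :=
  interpSetG (S0.carrier : Set V) (S1.carrier : Set V) S0.nrm S1.nrm θ p

/-- The quasi-norm of `(A0, A1)_{θ,p}`. -/
def interpNorm (S0 S1 : QuasiNormedSpaceOn V) (θ : ℝ) (p : ℝ≥0∞) (x : V) : ℝ :=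
  interpNormG (S0.carrier : Set V) (S1.carrier : Set V) S0.nrm S1.nrm θ p x

/-- A quasi-Banach lattice of real sequences indexed by `ℤ`. -/
structure SeqLattice where
  mem : (ℤ → ℝ) → Prop
  nrm : (ℤ → ℝ) → ℝ
  qc : ℝ
  one_le_qc : 1 ≤ qc
  zero_mem : mem 0
  add_mem : ∀ f g, mem f → mem g → mem (f + g)
  smul_mem : ∀ (c : ℝ) (f), mem f → mem (c • f)
  nrm_nonneg : ∀ f, 0 ≤ nrm f
  nrm_eq_zero : ∀ f, mem f → (nrm f = 0 ↔ f = 0)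
  nrm_smul : ∀ (c : ℝ) (f), mem f → nrm (c • f) = |c| * nrm f
  quasi_triangle : ∀ f g, mem f → mem g → nrm (f + g) ≤ qc * (nrm f + nrm g)
  latticeConst : ℝ
  latticeConst_pos : 0 < latticeConst
  lattice : ∀ f g, (∀ n : ℤ, |f n| ≤ |g n|) → mem g →
    mem f ∧ nrm f ≤ latticeConst * nrm g
  complete : ∀ F : ℕ → (ℤ → ℝ), (∀ k, mem (F k)) →
    (∀ ε : ℝ, 0 < ε → ∃ N : ℕ, ∀ m ≥ N, ∀ n ≥ N, nrm (F m - F n) < ε) →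
    ∃ f, mem f ∧ Filter.Tendsto (fun k => nrm (F k - f)) Filter.atTop (nhds 0)

/-- The sequence `(K(a, 2^n, A0, A1))_{n ∈ ℤ}`. -/
def Kseq (S0 S1 : QuasiNormedSpaceOn V) (a : V) : ℤ → ℝ :=
  fun n => Kfun S0 S1 ((2:ℝ) ^ n) a

end

/-!
(a) ⇒ (b) is a gliding-hump argument. If every `x ∈ A0 + A1` had `K(x, t_n) = O(ε_n)`, then
`K(x, t_n) → 0` for each `x`, and one builds `x = ∑ γ^j u_j` with `u_j ∈ S(A0+A1)`: at stage `j`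
choose `n_j` so that the partial sum `F_j` is already small at `t_{n_j}`, `ε_{n_j} ≤ γ^j δ/(j+1)`,
and `K(u_j, t_{n_j}) > c`. For small `γ` the series converges in `A0` and in `A1` separately and
its tail after `u_j` is negligible, so the quasi-triangle inequality forces
`K(x, t_{n_j}) > γ^j δ ≥ (j+1) ε_{n_j}`, which no constant `C` can dominate.

(b) ⇒ (a): by homogeneity `K(x, t) ≤ ‖x‖_{A0+A1} K(S(A0+A1), t)`. If (a) fails, choose `t_n ↓ 0`
with `K(S(A0+A1), t_n) ≤ 1/(n+1)`; then every `x` has `K(x, t_n) = O(1/(n+1))`.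
-/

namespace QuasiNormedSpaceOn

variable {V : Type*} [AddCommGroup V] [Module ℝ V] (S : QuasiNormedSpaceOn V)

lemma qc_pos : 0 < S.qc := zero_lt_one.trans_le S.one_le_qc

lemma nrm_zero : S.nrm 0 = 0 := (S.nrm_eq_zero 0 S.carrier.zero_mem).mpr rfl

lemma nrm_sub_comm {x y : V} (hx : x ∈ S.carrier) (hy : y ∈ S.carrier) :
    S.nrm (x - y) = S.nrm (y - x) := by
  simpa using S.nrm_smul (-1) (y - x) (S.carrier.sub_mem hy hx)

lemma nrm_add_le_of_qc_le {Q : ℝ} (hQ : S.qc ≤ Q) {x y : V} (hx : x ∈ S.carrier)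
    (hy : y ∈ S.carrier) : S.nrm (x + y) ≤ Q * (S.nrm x + S.nrm y) :=
  (S.quasi_triangle x hx y hy).trans <| by
    gcongr
    linarith [S.nrm_nonneg x, S.nrm_nonneg y]

lemma nrm_sum_range_le {h : ℕ → V} (hh : ∀ i, h i ∈ S.carrier) (m : ℕ) :
    S.nrm (∑ i ∈ Finset.range m, h i) ≤ ∑ i ∈ Finset.range m, S.qc ^ (i + 1) * S.nrm (h i) := by
  induction m generalizing h with
  | zero => simp [S.nrm_zero]
  | succ m ih =>
    rw [Finset.sum_range_succ', Finset.sum_range_succ', add_comm, add_comm _ (_ * _)]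
    calc S.nrm (h 0 + ∑ i ∈ Finset.range m, h (i + 1))
        ≤ S.qc * (S.nrm (h 0) + S.nrm (∑ i ∈ Finset.range m, h (i + 1))) :=
          S.quasi_triangle _ (hh 0) _ (S.carrier.sum_mem fun i _ => hh (i + 1))
      _ ≤ S.qc * (S.nrm (h 0) + ∑ i ∈ Finset.range m, S.qc ^ (i + 1) * S.nrm (h (i + 1))) := by
          gcongr
          · exact S.qc_pos.le
          · exact ih fun i => hh (i + 1)
      _ = S.qc ^ (0 + 1) * S.nrm (h 0) +
            ∑ i ∈ Finset.range m, S.qc ^ (i + 1 + 1) * S.nrm (h (i + 1)) := by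
          simp only [mul_add, Finset.mul_sum, pow_succ]
          ring_nf

lemma nrm_sub_le_of_tendsto {f : ℕ → V} {a : V} (hf : ∀ k, f k ∈ S.carrier)
    (ha : a ∈ S.carrier) (hlim : Tendsto (fun k => S.nrm (f k - a)) atTop (𝓝 0)) {j : ℕ}
    {b : ℝ} (hb : ∀ k, j ≤ k → S.nrm (f k - f j) ≤ b) : S.nrm (a - f j) ≤ S.qc * b := by
  have hlim' : Tendsto (fun k => S.qc * (S.nrm (f k - a) + b)) atTop (𝓝 (S.qc * (0 + b))) :=
    (hlim.add_const b).const_mul S.qc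
  refine (ge_of_tendsto hlim' ?_).trans_eq (by ring)
  filter_upwards [eventually_ge_atTop j] with k hk
  calc S.nrm (a - f j) = S.nrm ((a - f k) + (f k - f j)) := by rw [sub_add_sub_cancel]
    _ ≤ S.qc * (S.nrm (a - f k) + S.nrm (f k - f j)) :=
        S.quasi_triangle _ (S.carrier.sub_mem ha (hf k)) _ (S.carrier.sub_mem (hf k) (hf j))
    _ ≤ S.qc * (S.nrm (f k - a) + b) := by
        rw [S.nrm_sub_comm ha (hf k)]
        gcongr
        · exact S.qc_pos.le
        · exact hb k hk

lemma exists_nrm_sub_le_of_nrm_sub_le {f : ℕ → V} (hf : ∀ k, f k ∈ S.carrier) {b : ℕ → ℝ}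
    (hb : Tendsto b atTop (𝓝 0)) (hfb : ∀ j k, j ≤ k → S.nrm (f k - f j) ≤ b j) :
    ∃ a ∈ S.carrier, ∀ j, S.nrm (a - f j) ≤ S.qc * b j := by
  obtain ⟨a, ha, hlim⟩ := S.complete f hf fun δ hδ => by
    obtain ⟨N, hN⟩ := eventually_atTop.mp (hb.eventually (gt_mem_nhds hδ))
    refine ⟨N, fun m hm n hn => ?_⟩
    rcases le_total n m with h | h
    · exact (hfb n m h).trans_lt (hN n hn)
    · rw [S.nrm_sub_comm (hf m) (hf n)]
      exact (hfb m n h).trans_lt (hN m hm)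
  exact ⟨a, ha, fun j => S.nrm_sub_le_of_tendsto hf ha hlim (hfb j)⟩

lemma nrm_geom_sum_sub_le {g : ℕ → V} (hg : ∀ i, g i ∈ S.carrier) {B γ : ℝ}
    (hgB : ∀ i, S.nrm (g i) ≤ B) (hγ : 0 ≤ γ) (hγq : S.qc * γ ≤ 1 / 2) {j k : ℕ} (hjk : j ≤ k) :
    S.nrm (∑ i ∈ Finset.range k, γ ^ i • g i - ∑ i ∈ Finset.range j, γ ^ i • g i) ≤
      2 * S.qc * B * γ ^ j := by
  have hB : 0 ≤ B := (S.nrm_nonneg _).trans (hgB 0)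
  rw [← Finset.sum_Ico_eq_sub _ hjk, Finset.sum_Ico_eq_sum_range]
  calc _ ≤ ∑ i ∈ Finset.range (k - j), S.qc ^ (i + 1) * S.nrm (γ ^ (j + i) • g (j + i)) :=
        S.nrm_sum_range_le (fun i => S.carrier.smul_mem _ (hg _)) _
    _ ≤ ∑ i ∈ Finset.range (k - j), S.qc * B * γ ^ j * (S.qc * γ) ^ i := by
        refine Finset.sum_le_sum fun i _ => ?_
        rw [S.nrm_smul _ _ (hg _), abs_of_nonneg (by positivity)]
        calc S.qc ^ (i + 1) * (γ ^ (j + i) * S.nrm (g (j + i)))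
            ≤ S.qc ^ (i + 1) * (γ ^ (j + i) * B) := by
              have := S.qc_pos
              gcongr
              exact hgB _
          _ = S.qc * B * γ ^ j * (S.qc * γ) ^ i := by ring
    _ = S.qc * B * γ ^ j * ∑ i ∈ Finset.range (k - j), (S.qc * γ) ^ i := by
        rw [Finset.mul_sum]
    _ ≤ S.qc * B * γ ^ j * 2 := by
        have := S.qc_pos
        gcongr
        calc ∑ i ∈ Finset.range (k - j), (S.qc * γ) ^ i
            ≤ ∑ i ∈ Finset.range (k - j), (1 / 2 : ℝ) ^ i := by
              gcongr
          _ ≤ 2 := sum_geometric_two_le _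
    _ = 2 * S.qc * B * γ ^ j := by ring

lemma exists_nrm_sub_geom_sum_le {g : ℕ → V} (hg : ∀ i, g i ∈ S.carrier) {B γ : ℝ}
    (hgB : ∀ i, S.nrm (g i) ≤ B) (hγ : 0 ≤ γ) (hγq : S.qc * γ ≤ 1 / 2) :
    ∃ a ∈ S.carrier, ∀ j,
      S.nrm (a - ∑ i ∈ Finset.range j, γ ^ i • g i) ≤ 2 * S.qc ^ 2 * B * γ ^ j := by
  have hγ1 : γ < 1 := by nlinarith [S.one_le_qc]
  obtain ⟨a, ha, h⟩ := S.exists_nrm_sub_le_of_nrm_sub_le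
    (f := fun m => ∑ i ∈ Finset.range m, γ ^ i • g i)
    (fun m => S.carrier.sum_mem fun i _ => S.carrier.smul_mem _ (hg i))
    (by simpa using (tendsto_pow_atTop_nhds_zero_of_lt_one hγ hγ1).const_mul (2 * S.qc * B))
    (fun j k hjk => S.nrm_geom_sum_sub_le hg hgB hγ hγq hjk)
  exact ⟨a, ha, fun j => (h j).trans_eq (by ring)⟩

end QuasiNormedSpaceOn

lemma exists_antitone_pos_tendsto_zero_le (s : ℕ → ℝ) (hs : ∀ n, 0 < s n) :
    ∃ T : ℕ → ℝ, (∀ n, 0 < T n) ∧ (∀ n, T (n + 1) ≤ T n) ∧ Tendsto T atTop (𝓝 0) ∧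
      ∀ n, T n ≤ s n := by
  let σ : ℕ → ℝ := fun i => min (s i) (1 / (i + 1))
  let T : ℕ → ℝ := fun n => (Finset.range (n + 1)).inf' Finset.nonempty_range_add_one σ
  have hT : ∀ n, 0 < T n := fun n =>
    (Finset.lt_inf'_iff _).mpr fun i _ => lt_min (hs i) Nat.one_div_pos_of_nat
  have hTσ : ∀ n, T n ≤ σ n := fun n => Finset.inf'_le σ (Finset.self_mem_range_succ n)
  exact ⟨T, hT, fun n => Finset.inf'_mono σ (Finset.range_subset_range.mpr (n + 1).le_succ) _,
    squeeze_zero (fun n => (hT n).le) (fun n => (hTσ n).trans (min_le_right _ _))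
      tendsto_one_div_add_atTop_nhds_zero_nat,
    fun n => (hTσ n).trans (min_le_left _ _)⟩

lemma exists_seq_forall_geom_sum {E : Type*} [AddCommMonoid E] [Module ℝ E] (γ : ℝ)
    {P : ℕ → E → ℕ → E → Prop} (h : ∀ j s, ∃ n u, P j s n u) :
    ∃ (N : ℕ → ℕ) (u : ℕ → E), ∀ j, P j (∑ i ∈ Finset.range j, γ ^ i • u i) (N j) (u j) := by
  choose N U hNU using h
  let F : ℕ → E := fun j => Nat.rec 0 (fun j s => s + γ ^ j • U j s) j
  have hF : ∀ j, F j = ∑ i ∈ Finset.range j, γ ^ i • U i (F i) := by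
    intro j
    induction j with
    | zero => rfl
    | succ j ih => rw [Finset.sum_range_succ, ← ih]
  exact ⟨fun j => N j (F j), fun j => U j (F j), fun j => hF j ▸ hNU j (F j)⟩

section KFunctional

variable {V : Type*} [AddCommGroup V] [Module ℝ V] {S0 S1 : QuasiNormedSpaceOn V}
  {s t : ℝ} {x y : V}

def coupleQc (S0 S1 : QuasiNormedSpaceOn V) : ℝ := max S0.qc S1.qc

lemma one_le_coupleQc : 1 ≤ coupleQc S0 S1 := S0.one_le_qc.trans (le_max_left _ _)

lemma coupleQc_pos : 0 < coupleQc S0 S1 := zero_lt_one.trans_le one_le_coupleQc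

lemma csum_eq_sup : csum S0 S1 = ↑(S0.carrier ⊔ S1.carrier) := by
  ext x
  simp only [csum, sumSetG, SetLike.mem_coe, Submodule.mem_sup, Set.mem_ofPred_eq, eq_comm]

lemma Kfun_nonneg (ht : 0 ≤ t) (x : V) : 0 ≤ Kfun S0 S1 t x := by
  refine Real.sInf_nonneg ?_
  rintro r ⟨b0, -, b1, -, -, rfl⟩
  have := S0.nrm_nonneg b0
  have := S1.nrm_nonneg b1
  positivity

lemma sumNorm_nonneg (x : V) : 0 ≤ sumNorm S0 S1 x := Kfun_nonneg zero_le_one x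

lemma Kfun_le_of_eq_add (ht : 0 ≤ t) {b0 b1 : V} (h0 : b0 ∈ S0.carrier) (h1 : b1 ∈ S1.carrier)
    (hx : x = b0 + b1) : Kfun S0 S1 t x ≤ S0.nrm b0 + t * S1.nrm b1 := by
  refine csInf_le ⟨0, ?_⟩ ⟨b0, h0, b1, h1, hx, rfl⟩
  rintro r ⟨a0, -, a1, -, -, rfl⟩
  have := S0.nrm_nonneg a0
  have := S1.nrm_nonneg a1
  positivity

lemma le_Kfun_of_forall {r : ℝ} (hx : x ∈ csum S0 S1)
    (h : ∀ b0 ∈ S0.carrier, ∀ b1 ∈ S1.carrier, x = b0 + b1 → r ≤ S0.nrm b0 + t * S1.nrm b1) :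
    r ≤ Kfun S0 S1 t x := by
  obtain ⟨b0, h0, b1, h1, hx⟩ := hx
  refine le_csInf ⟨_, b0, h0, b1, h1, hx, rfl⟩ ?_
  rintro _ ⟨a0, ha0, a1, ha1, hxa, rfl⟩
  exact h a0 ha0 a1 ha1 hxa

lemma exists_eq_add_lt_of_Kfun_lt {r : ℝ} (hx : x ∈ csum S0 S1) (hr : Kfun S0 S1 t x < r) :
    ∃ b0 ∈ S0.carrier, ∃ b1 ∈ S1.carrier, x = b0 + b1 ∧ S0.nrm b0 + t * S1.nrm b1 < r := by
  obtain ⟨b0, h0, b1, h1, hx⟩ := hx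
  rw [Kfun, Kgen] at hr
  obtain ⟨_, ⟨a0, ha0, a1, ha1, hxa, rfl⟩, hlt⟩ :=
    exists_lt_of_csInf_lt (by exact ⟨_, b0, h0, b1, h1, hx, rfl⟩) hr
  exact ⟨a0, ha0, a1, ha1, hxa, hlt⟩

lemma Kfun_of_notMem_csum (hx : x ∉ csum S0 S1) : Kfun S0 S1 t x = 0 := by
  refine (congrArg sInf (Set.eq_empty_of_forall_notMem ?_)).trans Real.sInf_empty
  rintro r ⟨b0, h0, b1, h1, hxb, -⟩
  exact hx ⟨b0, h0, b1, h1, hxb⟩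

lemma Kfun_mono (hs : 0 ≤ s) (hst : s ≤ t) (x : V) : Kfun S0 S1 s x ≤ Kfun S0 S1 t x := by
  by_cases hx : x ∈ csum S0 S1
  · refine le_Kfun_of_forall hx fun b0 h0 b1 h1 hxb => (Kfun_le_of_eq_add hs h0 h1 hxb).trans ?_
    have := S1.nrm_nonneg b1
    gcongr
  · rw [Kfun_of_notMem_csum hx, Kfun_of_notMem_csum hx]

lemma Kfun_le_max_one_mul_sumNorm (ht : 0 ≤ t) (x : V) :
    Kfun S0 S1 t x ≤ max 1 t * sumNorm S0 S1 x := by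
  have hm : 0 < max 1 t := zero_lt_one.trans_le (le_max_left _ _)
  by_cases hx : x ∈ csum S0 S1
  · rw [← div_le_iff₀' hm]
    refine le_Kfun_of_forall hx fun b0 h0 b1 h1 hxb => ?_
    rw [div_le_iff₀' hm]
    calc Kfun S0 S1 t x ≤ S0.nrm b0 + t * S1.nrm b1 := Kfun_le_of_eq_add ht h0 h1 hxb
      _ ≤ max 1 t * (S0.nrm b0 + 1 * S1.nrm b1) := by
        have := S0.nrm_nonneg b0
        have := S1.nrm_nonneg b1
        nlinarith [le_max_left 1 t, le_max_right 1 t]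
  · rw [Kfun_of_notMem_csum hx]
    exact mul_nonneg hm.le (sumNorm_nonneg x)

lemma Kfun_smul_le (ht : 0 ≤ t) {ρ : ℝ} (hρ : ρ ≠ 0) (x : V) :
    Kfun S0 S1 t (ρ • x) ≤ |ρ| * Kfun S0 S1 t x := by
  have hρ' : 0 < |ρ| := abs_pos.mpr hρ
  by_cases hx : x ∈ csum S0 S1
  · rw [← div_le_iff₀' hρ']
    refine le_Kfun_of_forall hx fun b0 h0 b1 h1 hxb => ?_
    rw [div_le_iff₀' hρ']
    calc Kfun S0 S1 t (ρ • x) ≤ S0.nrm (ρ • b0) + t * S1.nrm (ρ • b1) :=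
          Kfun_le_of_eq_add ht (S0.carrier.smul_mem ρ h0) (S1.carrier.smul_mem ρ h1)
            (by rw [hxb, smul_add])
      _ = |ρ| * (S0.nrm b0 + t * S1.nrm b1) := by
          rw [S0.nrm_smul ρ b0 h0, S1.nrm_smul ρ b1 h1]
          ring
  · have hρx : ρ • x ∉ csum S0 S1 := by
      rwa [csum_eq_sup, SetLike.mem_coe, Submodule.smul_mem_iff _ hρ, ← SetLike.mem_coe,
        ← csum_eq_sup]
    rw [Kfun_of_notMem_csum hρx, Kfun_of_notMem_csum hx, mul_zero]

lemma Kfun_smul (ht : 0 ≤ t) {ρ : ℝ} (hρ : ρ ≠ 0) (x : V) :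
    Kfun S0 S1 t (ρ • x) = |ρ| * Kfun S0 S1 t x := by
  refine le_antisymm (Kfun_smul_le ht hρ x) ?_
  have h := Kfun_smul_le (S0 := S0) (S1 := S1) ht (inv_ne_zero hρ) (ρ • x)
  rwa [inv_smul_smul₀ hρ, abs_inv, le_inv_mul_iff₀ (abs_pos.mpr hρ)] at h

lemma Kfun_neg (ht : 0 ≤ t) (x : V) : Kfun S0 S1 t (-x) = Kfun S0 S1 t x := by
  simpa using Kfun_smul (S0 := S0) (S1 := S1) ht (ρ := -1) (by norm_num) x

lemma Kfun_add_le (ht : 0 ≤ t) (hx : x ∈ csum S0 S1) (hy : y ∈ csum S0 S1) :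
    Kfun S0 S1 t (x + y) ≤ coupleQc S0 S1 * (Kfun S0 S1 t x + Kfun S0 S1 t y) := by
  have hQ : 0 < coupleQc S0 S1 := coupleQc_pos
  rw [← div_le_iff₀' hQ, ← sub_le_iff_le_add]
  refine le_Kfun_of_forall hx fun a0 ha0 a1 ha1 hxa => ?_
  rw [sub_le_comm]
  refine le_Kfun_of_forall hy fun b0 hb0 b1 hb1 hyb => ?_
  rw [sub_le_iff_le_add', div_le_iff₀' hQ]
  calc Kfun S0 S1 t (x + y) ≤ S0.nrm (a0 + b0) + t * S1.nrm (a1 + b1) :=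
        Kfun_le_of_eq_add ht (S0.carrier.add_mem ha0 hb0) (S1.carrier.add_mem ha1 hb1)
          (by rw [hxa, hyb]; abel)
    _ ≤ coupleQc S0 S1 * (S0.nrm a0 + S0.nrm b0) +
          t * (coupleQc S0 S1 * (S1.nrm a1 + S1.nrm b1)) := by
        gcongr
        · exact S0.nrm_add_le_of_qc_le (le_max_left _ _) ha0 hb0
        · exact S1.nrm_add_le_of_qc_le (le_max_right _ _) ha1 hb1
    _ = coupleQc S0 S1 * ((S0.nrm a0 + t * S1.nrm a1) + (S0.nrm b0 + t * S1.nrm b1)) := by ring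

lemma Kfun_le_coupleQc_mul_add (ht : 0 ≤ t) (hx : x ∈ csum S0 S1) (hy : y ∈ csum S0 S1) :
    Kfun S0 S1 t x ≤ coupleQc S0 S1 * (Kfun S0 S1 t (x + y) + Kfun S0 S1 t y) := by
  have hxy : x + y ∈ csum S0 S1 := by rw [csum_eq_sup] at *; exact add_mem hx hy
  have hy' : -y ∈ csum S0 S1 := by rw [csum_eq_sup] at *; exact neg_mem hy
  simpa [Kfun_neg ht] using Kfun_add_le ht hxy hy'

lemma lt_Kfun_add_add {v z : V} {δ : ℝ} (ht : 0 ≤ t) (hy : y ∈ csum S0 S1)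
    (hv : v ∈ csum S0 S1) (hz : z ∈ csum S0 S1) (hδ : 0 ≤ δ)
    (hKv : 4 * coupleQc S0 S1 ^ 2 * δ < Kfun S0 S1 t v) (hKy : Kfun S0 S1 t y ≤ δ)
    (hKz : Kfun S0 S1 t z ≤ δ) : δ < Kfun S0 S1 t (y + v + z) := by
  set Q := coupleQc S0 S1
  have hQ : 1 ≤ Q := one_le_coupleQc
  have hyz : y + z ∈ csum S0 S1 := by rw [csum_eq_sup] at *; exact add_mem hy hz
  have hv_le := Kfun_le_coupleQc_mul_add ht hv hyz
  rw [show v + (y + z) = y + v + z by abel] at hv_le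
  have hyz_le : Q * Kfun S0 S1 t (y + z) ≤ Q * (Q * (2 * δ)) := by
    gcongr
    exact (Kfun_add_le ht hy hz).trans (by gcongr; linarith)
  have hQx : Q * (2 * Q * δ) < Q * Kfun S0 S1 t (y + v + z) := by nlinarith
  have hx := lt_of_mul_lt_mul_left hQx (by positivity)
  nlinarith

lemma bddAbove_Kfun_image_sumSphere (ht : 0 ≤ t) :
    BddAbove (Kfun S0 S1 t '' sumSphere S0 S1) := by
  refine ⟨max 1 t, ?_⟩
  rintro _ ⟨u, ⟨-, hu⟩, rfl⟩
  simpa [hu] using Kfun_le_max_one_mul_sumNorm (S0 := S0) (S1 := S1) ht u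

lemma exists_mem_sumSphere_lt_Kfun {c : ℝ} (hc : 0 ≤ c)
    (h : c < KSet S0 S1 t (sumSphere S0 S1)) : ∃ u ∈ sumSphere S0 S1, c < Kfun S0 S1 t u := by
  have hne : (Kfun S0 S1 t '' sumSphere S0 S1).Nonempty :=
    Set.nonempty_iff_ne_empty.mpr fun he => by
      rw [KSet, he, Real.sSup_empty] at h
      linarith
  obtain ⟨_, ⟨u, hu, rfl⟩, hcu⟩ := exists_lt_of_lt_csSup hne h
  exact ⟨u, hu, hcu⟩

lemma Kfun_le_sumNorm_mul_KSet (ht : 0 ≤ t) (hx : x ∈ csum S0 S1) :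
    Kfun S0 S1 t x ≤ sumNorm S0 S1 x * KSet S0 S1 t (sumSphere S0 S1) := by
  rcases (sumNorm_nonneg x).eq_or_lt with h0 | hpos
  · have := Kfun_le_max_one_mul_sumNorm (S0 := S0) (S1 := S1) ht x
    rw [← h0, mul_zero] at this
    rwa [← h0, zero_mul]
  have hρ : (sumNorm S0 S1 x)⁻¹ ≠ 0 := inv_ne_zero hpos.ne'
  have hsphere : (sumNorm S0 S1 x)⁻¹ • x ∈ sumSphere S0 S1 := by
    refine ⟨by rw [csum_eq_sup] at *; exact Submodule.smul_mem _ _ hx, ?_⟩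
    rw [sumNorm, Kfun_smul zero_le_one hρ, abs_of_pos (inv_pos.mpr hpos)]
    exact inv_mul_cancel₀ hpos.ne'
  calc Kfun S0 S1 t x = sumNorm S0 S1 x * Kfun S0 S1 t ((sumNorm S0 S1 x)⁻¹ • x) := by
        rw [Kfun_smul ht hρ, abs_of_pos (inv_pos.mpr hpos), mul_inv_cancel_left₀ hpos.ne']
    _ ≤ sumNorm S0 S1 x * KSet S0 S1 t (sumSphere S0 S1) := by
        gcongr
        exact le_csSup (bddAbove_Kfun_image_sumSphere ht) ⟨_, hsphere, rfl⟩

lemma exists_sumNorm_sub_geom_sum_le {u : ℕ → V} (hu : ∀ i, u i ∈ csum S0 S1) {B γ : ℝ}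
    (huB : ∀ i, sumNorm S0 S1 (u i) < B) (hγ : 0 ≤ γ) (hγQ : coupleQc S0 S1 * γ ≤ 1 / 2) :
    ∃ x ∈ csum S0 S1, ∀ j, sumNorm S0 S1 (x - ∑ i ∈ Finset.range j, γ ^ i • u i) ≤
      4 * coupleQc S0 S1 ^ 2 * B * γ ^ j := by
  choose a ha b hb hab habB using fun i => exists_eq_add_lt_of_Kfun_lt (hu i) (huB i)
  have haB : ∀ i, S0.nrm (a i) ≤ B := fun i => by linarith [habB i, S1.nrm_nonneg (b i)]
  have hbB : ∀ i, S1.nrm (b i) ≤ B := fun i => by linarith [habB i, S0.nrm_nonneg (a i)]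
  have hB : 0 ≤ B := (S0.nrm_nonneg _).trans (haB 0)
  have hq0 : S0.qc ≤ coupleQc S0 S1 := le_max_left _ _
  have hq1 : S1.qc ≤ coupleQc S0 S1 := le_max_right _ _
  obtain ⟨A0, hA0, hA0j⟩ := S0.exists_nrm_sub_geom_sum_le ha haB hγ
    (by nlinarith [S0.qc_pos])
  obtain ⟨A1, hA1, hA1j⟩ := S1.exists_nrm_sub_geom_sum_le hb hbB hγ
    (by nlinarith [S1.qc_pos])
  refine ⟨A0 + A1, ⟨A0, hA0, A1, hA1, rfl⟩, fun j => ?_⟩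
  have hsplit : A0 + A1 - ∑ i ∈ Finset.range j, γ ^ i • u i =
      (A0 - ∑ i ∈ Finset.range j, γ ^ i • a i) + (A1 - ∑ i ∈ Finset.range j, γ ^ i • b i) := by
    simp only [hab, smul_add, Finset.sum_add_distrib]
    abel
  calc _ ≤ S0.nrm (A0 - ∑ i ∈ Finset.range j, γ ^ i • a i) +
          1 * S1.nrm (A1 - ∑ i ∈ Finset.range j, γ ^ i • b i) :=
        Kfun_le_of_eq_add zero_le_one
          (S0.carrier.sub_mem hA0 (S0.carrier.sum_mem fun i _ => S0.carrier.smul_mem _ (ha i)))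
          (S1.carrier.sub_mem hA1 (S1.carrier.sum_mem fun i _ => S1.carrier.smul_mem _ (hb i)))
          hsplit
    _ ≤ 2 * S0.qc ^ 2 * B * γ ^ j + 1 * (2 * S1.qc ^ 2 * B * γ ^ j) := by
        gcongr
        exacts [hA0j j, hA1j j]
    _ ≤ 4 * coupleQc S0 S1 ^ 2 * B * γ ^ j := by
        have h0 : S0.qc ^ 2 ≤ coupleQc S0 S1 ^ 2 := by gcongr; exact S0.qc_pos.le
        have h1 : S1.qc ^ 2 ≤ coupleQc S0 S1 ^ 2 := by gcongr; exact S1.qc_pos.le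
        have : 0 ≤ B * γ ^ j := by positivity
        nlinarith

lemma lt_Kfun_of_sumNorm_sub_geom_sum_le {u : ℕ → V} (hu : ∀ i, u i ∈ csum S0 S1) {x : V}
    (hx : x ∈ csum S0 S1) {γ δ D M τ : ℝ} (hγ : 0 < γ) (hδ : 0 ≤ δ) (hτ : 0 ≤ τ) (hτM : τ ≤ M)
    (hγD : max 1 M * D * γ ≤ δ)
    (hxu : ∀ j, sumNorm S0 S1 (x - ∑ i ∈ Finset.range j, γ ^ i • u i) ≤ D * γ ^ j) {j : ℕ}
    (hKu : 4 * coupleQc S0 S1 ^ 2 * δ < Kfun S0 S1 τ (u j))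
    (hKP : Kfun S0 S1 τ (∑ i ∈ Finset.range j, γ ^ i • u i) ≤ γ ^ j * δ) :
    γ ^ j * δ < Kfun S0 S1 τ x := by
  have hP : ∀ j, ∑ i ∈ Finset.range j, γ ^ i • u i ∈ csum S0 S1 := fun j => by
    rw [csum_eq_sup] at *
    exact Submodule.sum_mem _ fun i _ => Submodule.smul_mem _ _ (hu i)
  have hγj : 0 < γ ^ j := pow_pos hγ j
  have huj : γ ^ j • u j ∈ csum S0 S1 := by
    rw [csum_eq_sup] at *
    exact Submodule.smul_mem _ _ (hu j)
  have htail_mem : x - ∑ i ∈ Finset.range (j + 1), γ ^ i • u i ∈ csum S0 S1 := by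
    have := hP (j + 1)
    rw [csum_eq_sup] at *
    exact sub_mem hx this
  have htail : Kfun S0 S1 τ (x - ∑ i ∈ Finset.range (j + 1), γ ^ i • u i) ≤ γ ^ j * δ :=
    calc _ ≤ max 1 τ * sumNorm S0 S1 (x - ∑ i ∈ Finset.range (j + 1), γ ^ i • u i) :=
          Kfun_le_max_one_mul_sumNorm hτ _
      _ ≤ max 1 M * (D * γ ^ (j + 1)) := by
          gcongr
          exacts [sumNorm_nonneg _, hxu (j + 1)]
      _ = γ ^ j * (max 1 M * D * γ) := by ring
      _ ≤ γ ^ j * δ := by gcongr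
  have hKv : 4 * coupleQc S0 S1 ^ 2 * (γ ^ j * δ) < Kfun S0 S1 τ (γ ^ j • u j) := by
    rw [Kfun_smul hτ hγj.ne', abs_of_pos hγj]
    nlinarith
  have := lt_Kfun_add_add hτ (hP j) huj htail_mem (by positivity) hKv hKP htail
  rwa [Finset.sum_range_succ, add_sub_cancel] at this

lemma tendsto_Kfun_of_forall_le_mul {ε t : ℕ → ℝ} (hε : Tendsto ε atTop (𝓝 0))
    (ht : ∀ n, 0 ≤ t n) (h : ∀ x ∈ csum S0 S1, ∃ C, ∀ n, Kfun S0 S1 (t n) x ≤ C * ε n) (x : V) :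
    Tendsto (fun n => Kfun S0 S1 (t n) x) atTop (𝓝 0) := by
  by_cases hx : x ∈ csum S0 S1
  · obtain ⟨C, hC⟩ := h x hx
    exact squeeze_zero (fun n => Kfun_nonneg (ht n) x) hC (by simpa using hε.const_mul C)
  · simpa only [Kfun_of_notMem_csum hx] using tendsto_const_nhds

lemma exists_antitone_forall_Kfun_le
    (h : ∀ c, 0 < c → ∃ t, 0 < t ∧ KSet S0 S1 t (sumSphere S0 S1) ≤ c) :
    ∃ T : ℕ → ℝ, (∀ n, 0 < T n) ∧ (∀ n, T (n + 1) ≤ T n) ∧ Tendsto T atTop (𝓝 0) ∧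
      ∀ x ∈ csum S0 S1, ∀ n : ℕ, Kfun S0 S1 (T n) x ≤ sumNorm S0 S1 x * (1 / (n + 1)) := by
  choose s hs hKs using fun n : ℕ => h (1 / (n + 1)) Nat.one_div_pos_of_nat
  obtain ⟨T, hT, hT_anti, hT0, hTs⟩ := exists_antitone_pos_tendsto_zero_le s hs
  refine ⟨T, hT, hT_anti, hT0, fun x hx n => ?_⟩
  calc Kfun S0 S1 (T n) x ≤ Kfun S0 S1 (s n) x := Kfun_mono (hT n).le (hTs n) x
    _ ≤ sumNorm S0 S1 x * KSet S0 S1 (s n) (sumSphere S0 S1) :=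
        Kfun_le_sumNorm_mul_KSet (hs n).le hx
    _ ≤ sumNorm S0 S1 x * (1 / (n + 1)) := by
        gcongr
        exacts [sumNorm_nonneg x, hKs n]

theorem exists_not_bigO_Kfun {c M : ℝ} (hc : 0 < c)
    (hKS : ∀ t, 0 < t → c < KSet S0 S1 t (sumSphere S0 S1)) {ε t : ℕ → ℝ}
    (hε : Tendsto ε atTop (𝓝 0)) (ht : ∀ n, 0 < t n) (htM : ∀ n, t n ≤ M) :
    ∃ x ∈ csum S0 S1, ¬ ∃ C : ℝ, 0 < C ∧ ∀ n, Kfun S0 S1 (t n) x ≤ C * ε n := by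
  by_contra! hbig
  set Q := coupleQc S0 S1
  have hQ : 0 < Q := coupleQc_pos
  set δ := c / (4 * Q ^ 2)
  have hδ : 0 < δ := by positivity
  have hQδ : 4 * Q ^ 2 * δ = c := mul_div_cancel₀ c (by positivity)
  obtain ⟨γ, hγ, hγQ, hγD⟩ :
      ∃ γ : ℝ, 0 < γ ∧ Q * γ ≤ 1 / 2 ∧ max 1 M * (4 * Q ^ 2 * 2) * γ ≤ δ := by
    have hMD : 0 < max 1 M * (4 * Q ^ 2 * 2) := by positivity
    refine ⟨min (1 / (2 * Q)) (δ / (max 1 M * (4 * Q ^ 2 * 2))), by positivity, ?_, ?_⟩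
    · exact (mul_le_mul_of_nonneg_left (min_le_left _ _) hQ.le).trans_eq (by field_simp)
    · exact (mul_le_mul_of_nonneg_left (min_le_right _ _) hMD.le).trans_eq (by field_simp)
  have hsmall := tendsto_Kfun_of_forall_le_mul hε (fun n => (ht n).le)
    fun x hx => (hbig x hx).imp fun _ hC => hC.2
  obtain ⟨N, u, hu⟩ := exists_seq_forall_geom_sum γ (P := fun j s n u =>
      u ∈ sumSphere S0 S1 ∧ Kfun S0 S1 (t n) s ≤ γ ^ j * δ ∧ ε n ≤ γ ^ j * δ / (j + 1) ∧
        c < Kfun S0 S1 (t n) u) fun j s => by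
    have hη : 0 < γ ^ j * δ := by positivity
    obtain ⟨n, hKs, hεn⟩ := ((hsmall s).eventually (ge_mem_nhds hη)).and
      (hε.eventually (ge_mem_nhds (by positivity : 0 < γ ^ j * δ / (j + 1)))) |>.exists
    obtain ⟨u, hu, hcu⟩ := exists_mem_sumSphere_lt_Kfun hc.le (hKS _ (ht n))
    exact ⟨n, u, hu, hKs, hεn, hcu⟩
  obtain ⟨x, hx, hxu⟩ := exists_sumNorm_sub_geom_sum_le (fun j => (hu j).1.1) (B := 2)
    (fun j => by rw [(hu j).1.2]; norm_num) hγ.le hγQ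
  obtain ⟨C, hC, hCx⟩ := hbig x hx
  obtain ⟨j, hj⟩ := exists_nat_ge C
  obtain ⟨-, hKs, hεn, hKu⟩ := hu j
  have hlow : γ ^ j * δ < Kfun S0 S1 (t (N j)) x :=
    lt_Kfun_of_sumNorm_sub_geom_sum_le (fun j => (hu j).1.1) hx hγ hδ.le (ht _).le (htM _) hγD
      hxu (hQδ ▸ hKu) hKs
  have hup : Kfun S0 S1 (t (N j)) x ≤ γ ^ j * δ :=
    calc Kfun S0 S1 (t (N j)) x ≤ C * ε (N j) := hCx _
      _ ≤ C * (γ ^ j * δ / (j + 1)) := by gcongr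
      _ ≤ γ ^ j * δ := by
          rw [mul_div_assoc', div_le_iff₀ (by positivity), mul_comm C]
          gcongr
          linarith
  exact hlow.not_ge hup

end KFunctional

theorem stmt1_general {V : Type*} [AddCommGroup V] [Module ℝ V]
    (S0 S1 : QuasiNormedSpaceOn V) :
    (∃ c : ℝ, 0 < c ∧ ∀ t : ℝ, 0 < t → c < KSet S0 S1 t (sumSphere S0 S1)) ↔
    (∀ ε t : ℕ → ℝ,
      (∀ n, 0 < ε n) → (∀ n, ε (n+1) ≤ ε n) → Filter.Tendsto ε Filter.atTop (nhds 0) →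
      (∀ n, 0 < t n) → (∀ n, t (n+1) ≤ t n) → Filter.Tendsto t Filter.atTop (nhds 0) →
      ∃ x ∈ csum S0 S1, ¬ ∃ C : ℝ, 0 < C ∧ ∀ n : ℕ, Kfun S0 S1 (t n) x ≤ C * ε n) := by
  constructor
  · rintro ⟨c, hc, hKS⟩ ε t - - hε ht ht_anti -
    exact exists_not_bigO_Kfun hc hKS hε ht fun n =>
      antitone_nat_of_succ_le (f := t) ht_anti n.zero_le
  · intro h
    by_contra! hKS
    obtain ⟨T, hT, hT_anti, hT0, hKT⟩ := exists_antitone_forall_Kfun_le hKS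
    obtain ⟨x, hx, hnot⟩ := h (fun n => 1 / (n + 1)) T (fun n => Nat.one_div_pos_of_nat)
      (fun n => Nat.one_div_le_one_div n.le_succ) tendsto_one_div_add_atTop_nhds_zero_nat
      hT hT_anti hT0
    refine hnot ⟨max (sumNorm S0 S1 x) 1, by positivity, fun n => (hKT x hx n).trans ?_⟩
    exact mul_le_mul_of_nonneg_right (le_max_left _ _) Nat.one_div_pos_of_nat.le

/-- For a quasi-Banach couple `(A0,A1)` the following are equivalent:
(a) `K(S(A0+A1), t, A0, A1) > c` for all `t > 0` and some constant `c > 0`;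
(b) for all non-increasing null sequences `(ε_n)`, `(t_n)` of positive reals there is
`x ∈ A0+A1` with `K(x, t_n, A0, A1) ≠ O(ε_n)`. -/
theorem stmt1 {V : Type*} [AddCommGroup V] [Module ℝ V] [TopologicalSpace V]
    [IsTopologicalAddGroup V] [ContinuousSMul ℝ V] [T2Space V]
    (S0 S1 : QuasiNormedSpaceOn V) (hcouple : IsQBCouple S0 S1) :
    (∃ c : ℝ, 0 < c ∧ ∀ t : ℝ, 0 < t → c < KSet S0 S1 t (sumSphere S0 S1)) ↔
    (∀ ε t : ℕ → ℝ,
      (∀ n, 0 < ε n) → (∀ n, ε (n+1) ≤ ε n) → Filter.Tendsto ε Filter.atTop (nhds 0) →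
      (∀ n, 0 < t n) → (∀ n, t (n+1) ≤ t n) → Filter.Tendsto t Filter.atTop (nhds 0) →
      ∃ x ∈ csum S0 S1, ¬ ∃ C : ℝ, 0 < C ∧ ∀ n : ℕ, Kfun S0 S1 (t n) x ≤ C * ε n) :=
  stmt1_general S0 S1
end

section
/- Let X and Y be Banach spaces that admit uniformly complemented copies of ℓ²_n for each n: there is a constant C ≥ 1 such that for every n there exist a bounded projection P_n on X with ‖P_n‖ ≤ C whose range E_n admits a linear isomorphism u_n : E_n → ℓ²_n with ‖u_n‖, ‖u_n^{-1}‖ ≤ C, and similarly a projection Q_n on Y with range F_n that is C-isomorphic to ℓ²_n. Then for every s-numbers sequence s and every non-increasing sequence (ε_n) of positive reals converging to 0, there exists an approximable operator T ∈ L^A(X,Y) such that (s_n(T)) is not O(ε_n), i.e., there is no constant K>0 with s_n(T) ≤ Kε_n for all n. -/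
open Filter Topology
open scoped ENNReal NNReal
open scoped Classical

noncomputable section

/-- An `s`-numbers sequence (s-numbers scale) in the sense of Pietsch: a rule
assigning to every bounded operator between Banach spaces a non-increasing sequence
of non-negative reals, starting at the operator norm, additive and multiplicative in
the index, normalized on the identities of the Euclidean spaces `ℓ²_n`, and vanishing
on operators of small rank. Here `s X Y T n` represents `s_{n+1}(T)`. -/
structure SNumberScale where
  s : ∀ (X Y : Type) [NormedAddCommGroup X] [NormedSpace ℝ X] [CompleteSpace X]
      [NormedAddCommGroup Y] [NormedSpace ℝ Y] [CompleteSpace Y],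
      (X →L[ℝ] Y) → ℕ → ℝ
  nonneg : ∀ (X Y : Type) [NormedAddCommGroup X] [NormedSpace ℝ X] [CompleteSpace X]
      [NormedAddCommGroup Y] [NormedSpace ℝ Y] [CompleteSpace Y]
      (T : X →L[ℝ] Y) (n : ℕ), 0 ≤ s X Y T n
  antitone : ∀ (X Y : Type) [NormedAddCommGroup X] [NormedSpace ℝ X] [CompleteSpace X]
      [NormedAddCommGroup Y] [NormedSpace ℝ Y] [CompleteSpace Y]
      (T : X →L[ℝ] Y) (n : ℕ), s X Y T (n + 1) ≤ s X Y T n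
  first_eq_norm : ∀ (X Y : Type) [NormedAddCommGroup X] [NormedSpace ℝ X]
      [CompleteSpace X] [NormedAddCommGroup Y] [NormedSpace ℝ Y] [CompleteSpace Y]
      (T : X →L[ℝ] Y), s X Y T 0 = ‖T‖
  add_le : ∀ (X Y : Type) [NormedAddCommGroup X] [NormedSpace ℝ X] [CompleteSpace X]
      [NormedAddCommGroup Y] [NormedSpace ℝ Y] [CompleteSpace Y]
      (S T : X →L[ℝ] Y) (n m : ℕ),
      s X Y (S + T) (n + m) ≤ s X Y S n + s X Y T m
  comp_le : ∀ (X Y Z : Type) [NormedAddCommGroup X] [NormedSpace ℝ X] [CompleteSpace X]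
      [NormedAddCommGroup Y] [NormedSpace ℝ Y] [CompleteSpace Y]
      [NormedAddCommGroup Z] [NormedSpace ℝ Z] [CompleteSpace Z]
      (S : X →L[ℝ] Y) (T : Y →L[ℝ] Z) (n m : ℕ),
      s X Z (T.comp S) (n + m) ≤ s Y Z T n * s X Y S m
  id_euclidean : ∀ n : ℕ,
      s (EuclideanSpace ℝ (Fin (n + 1))) (EuclideanSpace ℝ (Fin (n + 1)))
        (ContinuousLinearMap.id ℝ (EuclideanSpace ℝ (Fin (n + 1)))) n = 1
  rank_small : ∀ (X Y : Type) [NormedAddCommGroup X] [NormedSpace ℝ X] [CompleteSpace X]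
      [NormedAddCommGroup Y] [NormedSpace ℝ Y] [CompleteSpace Y]
      (T : X →L[ℝ] Y) (n : ℕ),
      Module.rank ℝ (LinearMap.range (T : X →ₗ[ℝ] Y)) < ((n : Cardinal) + 1) → s X Y T n = 0

variable {X Y : Type*} [NormedAddCommGroup X] [NormedSpace ℝ X]
  [NormedAddCommGroup Y] [NormedSpace ℝ Y]

/-- An approximable operator: a member of the operator-norm closure of the
finite-rank operators. -/
def IsApproximable (T : X →L[ℝ] Y) : Prop :=
  T ∈ closure {R : X →L[ℝ] Y | FiniteDimensional ℝ (LinearMap.range (R : X →ₗ[ℝ] Y))}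

/-- `X` admits, for each `n`, a `C`-complemented subspace `C`-isomorphic to `ℓ²_n`. -/
def UnifComplEuclidean (C : ℝ) (X : Type*) [NormedAddCommGroup X] [NormedSpace ℝ X] :
    Prop :=
  ∀ n : ℕ, ∃ P : X →L[ℝ] X, P.comp P = P ∧ ‖P‖ ≤ C ∧
    ∃ u : ↥(LinearMap.range (P : X →ₗ[ℝ] X)) ≃L[ℝ] EuclideanSpace ℝ (Fin (n + 1)),
      ‖(u : ↥(LinearMap.range (P : X →ₗ[ℝ] X)) →L[ℝ] EuclideanSpace ℝ (Fin (n + 1)))‖ ≤ C ∧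
      ‖(u.symm : EuclideanSpace ℝ (Fin (n + 1)) →L[ℝ] ↥(LinearMap.range (P : X →ₗ[ℝ] X)))‖ ≤ C

/-- Membership in `L^{(s)}_{p,q}(X,Y)` for an s-numbers scale `σ`. -/
def memLs (σ : SNumberScale) (p : ℝ) (q : ℝ≥0∞)
    (X Y : Type) [NormedAddCommGroup X] [NormedSpace ℝ X] [CompleteSpace X]
    [NormedAddCommGroup Y] [NormedSpace ℝ Y] [CompleteSpace Y]
    (T : X →L[ℝ] Y) : Prop :=
  if q = ⊤ then ∃ M : ℝ, ∀ n : ℕ, ((n : ℝ) + 1) ^ (1/p) * σ.s X Y T n ≤ M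
  else Summable (fun n : ℕ =>
    (((n : ℝ) + 1) ^ (1/p - 1/q.toReal) * σ.s X Y T n) ^ q.toReal)

/-!
Uniformly complemented copies of `ℓ²_n` give maps `J : ℓ²_{n+1} → X`, `Π : X → ℓ²_{n+1}` with
`Π J = id` and norms bounded independently of `n`, and likewise in `Y`. For a fast decaying
geometric weight `θ` put `T = ∑ₖ θᵏ J^Y_{n_k} Π^X_{n_k}`, an operator-norm limit of finite-rank
partial sums. Compressing the tail of `T` from block `k` by `Π^Y_{n_k}` and `J^X_{n_k}` gives
`θᵏ • id` on `ℓ²_{n_k+1}` up to an error of half that size, so the s-number axioms force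
`s_{n_k}(tail) ≳ θᵏ`; since the earlier blocks have rank at most `m_k`, taking `n_k = a_k + m_k`
gives `s_{a_k}(T) ≳ θᵏ`. As `ε → 0` we may pick `a_k` with `k |ε_{a_k}| ≪ θᵏ`, which rules out
`s_n(T) ≤ K ε_n`.
-/

namespace SNumberScale

variable (σ : SNumberScale) {X Y Z : Type}
  [NormedAddCommGroup X] [NormedSpace ℝ X] [CompleteSpace X]
  [NormedAddCommGroup Y] [NormedSpace ℝ Y] [CompleteSpace Y]
  [NormedAddCommGroup Z] [NormedSpace ℝ Z] [CompleteSpace Z]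

theorem s_comp_le_norm_mul (S : X →L[ℝ] Y) (T : Y →L[ℝ] Z) (n : ℕ) :
    σ.s X Z (T.comp S) n ≤ ‖T‖ * σ.s X Y S n := by
  simpa [σ.first_eq_norm] using σ.comp_le X Y Z S T 0 n

theorem s_comp_le_mul_norm (S : X →L[ℝ] Y) (T : Y →L[ℝ] Z) (n : ℕ) :
    σ.s X Z (T.comp S) n ≤ σ.s Y Z T n * ‖S‖ := by
  simpa [σ.first_eq_norm] using σ.comp_le X Y Z S T n 0

theorem s_add_le_add_norm (S T : X →L[ℝ] Y) (n : ℕ) :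
    σ.s X Y (S + T) n ≤ σ.s X Y S n + ‖T‖ := by
  simpa [σ.first_eq_norm] using σ.add_le X Y S T n 0

theorem s_add_le_of_rank_le (S F : X →L[ℝ] Y) {m : ℕ}
    (hF : Module.rank ℝ (LinearMap.range (F : X →ₗ[ℝ] Y)) ≤ m) (n : ℕ) :
    σ.s X Y (S + F) (n + m) ≤ σ.s X Y S n := by
  have hF0 : σ.s X Y F m = 0 :=
    σ.rank_small X Y F m (hF.trans_lt (by exact_mod_cast m.lt_succ_self))
  simpa [hF0] using σ.add_le X Y S F n m

theorem s_smul_le (c : ℝ) (T : X →L[ℝ] Y) (n : ℕ) :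
    σ.s X Y (c • T) n ≤ |c| * σ.s X Y T n := by
  have h := σ.s_comp_le_norm_mul T (c • ContinuousLinearMap.id ℝ Y) n
  rw [ContinuousLinearMap.smul_comp, ContinuousLinearMap.id_comp] at h
  refine h.trans (mul_le_mul_of_nonneg_right ?_ (σ.nonneg ..))
  calc ‖c • ContinuousLinearMap.id ℝ Y‖ ≤ ‖c‖ * ‖ContinuousLinearMap.id ℝ Y‖ :=
        ContinuousLinearMap.opNorm_smul_le c _
    _ ≤ |c| := mul_le_of_le_one_right (abs_nonneg c) ContinuousLinearMap.norm_id_le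

theorem s_smul (c : ℝ) (T : X →L[ℝ] Y) (n : ℕ) :
    σ.s X Y (c • T) n = |c| * σ.s X Y T n := by
  refine (σ.s_smul_le c T n).antisymm ?_
  rcases eq_or_ne c 0 with rfl | hc
  · simpa using σ.nonneg X Y 0 n
  · have h := σ.s_smul_le c⁻¹ (c • T) n
    rw [smul_smul, inv_mul_cancel₀ hc, one_smul, abs_inv] at h
    rwa [le_inv_mul_iff₀ (abs_pos.2 hc)] at h

theorem le_norm_mul_s_mul_norm_add (n : ℕ) (G : X →L[ℝ] Y)
    (J : EuclideanSpace ℝ (Fin (n + 1)) →L[ℝ] X) (P : Y →L[ℝ] EuclideanSpace ℝ (Fin (n + 1)))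
    (c : ℝ) :
    c ≤ ‖P‖ * σ.s X Y G n * ‖J‖ + ‖P.comp (G.comp J) - c • ContinuousLinearMap.id ℝ _‖ := by
  set W := P.comp (G.comp J)
  have hW : σ.s _ _ W n ≤ ‖P‖ * σ.s X Y G n * ‖J‖ := by
    rw [mul_assoc]
    exact (σ.s_comp_le_norm_mul _ _ n).trans
      (mul_le_mul_of_nonneg_left (σ.s_comp_le_mul_norm _ _ n) (norm_nonneg _))
  have h := σ.s_add_le_add_norm W (c • ContinuousLinearMap.id ℝ _ - W) n
  rw [add_sub_cancel, σ.s_smul, σ.id_euclidean, mul_one, norm_sub_rev] at h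
  linarith [le_abs_self c]

end SNumberScale

structure EuclideanRetract (K : ℝ) (X : Type) [NormedAddCommGroup X] [NormedSpace ℝ X]
    (n : ℕ) where
  incl : EuclideanSpace ℝ (Fin (n + 1)) →L[ℝ] X
  proj : X →L[ℝ] EuclideanSpace ℝ (Fin (n + 1))
  proj_comp_incl : proj.comp incl = ContinuousLinearMap.id ℝ _
  norm_incl_le : ‖incl‖ ≤ K
  norm_proj_le : ‖proj‖ ≤ K

theorem UnifComplEuclidean.nonempty_euclideanRetract {C : ℝ} {X : Type}
    [NormedAddCommGroup X] [NormedSpace ℝ X] (hX : UnifComplEuclidean C X) (hC : 1 ≤ C)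
    (n : ℕ) : Nonempty (EuclideanRetract (C * C) X n) := by
  obtain ⟨P, hPP, hP, u, hu, hu'⟩ := hX n
  have hC0 : 0 ≤ C := zero_le_one.trans hC
  let E := LinearMap.range (P : X →ₗ[ℝ] X)
  let P' : X →L[ℝ] E := P.codRestrict E (LinearMap.mem_range_self _)
  have hP' : ‖P'‖ ≤ C :=
    P'.opNorm_le_bound hC0 fun x => (P.le_opNorm x).trans (by gcongr)
  refine ⟨⟨E.subtypeL.comp (u.symm : _ →L[ℝ] E), (u : E →L[ℝ] _).comp P', ?_, ?_, ?_⟩⟩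
  · ext1 x
    obtain ⟨y, hy⟩ := (u.symm x).2
    have hfix : P' (u.symm x) = u.symm x := Subtype.ext <| by
      change P (u.symm x : X) = u.symm x
      rw [← hy]
      exact congrArg (fun f : X →L[ℝ] X => f y) hPP
    change u (P' (u.symm x)) = x
    rw [hfix, u.apply_symm_apply]
  · refine (ContinuousLinearMap.opNorm_comp_le _ _).trans ?_
    calc _ ≤ 1 * C := mul_le_mul (Submodule.norm_subtypeL_le E) hu'
          (ContinuousLinearMap.opNorm_nonneg _) zero_le_one
      _ ≤ C * C := mul_le_mul_of_nonneg_right hC hC0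
  · refine (ContinuousLinearMap.opNorm_comp_le _ _).trans ?_
    exact mul_le_mul hu hP' (ContinuousLinearMap.opNorm_nonneg _) hC0

/-- Block `k` of the series lives on `ℓ²` of dimension `a k + blockOffset a k + 1`, and
`blockOffset a k` bounds the rank of the blocks before it, so that discarding them shifts the
`s`-number index from `a k + blockOffset a k` down to `a k`. -/
def blockOffset (a : ℕ → ℕ) : ℕ → ℕ
  | 0 => 0
  | k + 1 => blockOffset a k + (a k + blockOffset a k + 1)

section BlockSeries

open ContinuousLinearMap

variable {X Y : Type} [NormedAddCommGroup X] [NormedSpace ℝ X]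
  [NormedAddCommGroup Y] [NormedSpace ℝ Y] {K : ℝ}
  (rX : ∀ n, EuclideanRetract K X n) (rY : ∀ n, EuclideanRetract K Y n) (θ : ℝ) (a : ℕ → ℕ)

def blockTerm (k : ℕ) : X →L[ℝ] Y :=
  θ ^ k • ((rY (a k + blockOffset a k)).incl.comp (rX (a k + blockOffset a k)).proj)

def blockSeries : X →L[ℝ] Y :=
  ∑' k, blockTerm rX rY θ a k

theorem norm_blockTerm_le (hθ : 0 ≤ θ) (k : ℕ) :
    ‖blockTerm rX rY θ a k‖ ≤ K ^ 2 * θ ^ k := by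
  set n := a k + blockOffset a k
  have hK : 0 ≤ K := (opNorm_nonneg _).trans (rX n).norm_incl_le
  calc ‖blockTerm rX rY θ a k‖ ≤ ‖θ ^ k‖ * ‖(rY n).incl.comp (rX n).proj‖ :=
        opNorm_smul_le _ _
    _ ≤ θ ^ k * (K * K) := by
      rw [Real.norm_of_nonneg (pow_nonneg hθ k)]
      exact mul_le_mul_of_nonneg_left ((opNorm_comp_le _ _).trans
        (mul_le_mul (rY n).norm_incl_le (rX n).norm_proj_le (opNorm_nonneg _) hK))
        (pow_nonneg hθ k)
    _ = K ^ 2 * θ ^ k := by ring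

theorem rank_range_blockTerm_le (k : ℕ) :
    Module.rank ℝ (LinearMap.range (blockTerm rX rY θ a k : X →ₗ[ℝ] Y)) ≤
      (a k + blockOffset a k + 1 : ℕ) := by
  set n := a k + blockOffset a k
  have hfactor : (blockTerm rX rY θ a k : X →ₗ[ℝ] Y) =
      ((θ ^ k • (rY n).incl : _ →L[ℝ] Y) : _ →ₗ[ℝ] Y).comp
        ((rX n).proj : X →ₗ[ℝ] EuclideanSpace ℝ (Fin (n + 1))) := by
    ext x
    simp [blockTerm, n]
  rw [hfactor]
  refine (LinearMap.rank_comp_le_left _ _).trans ((LinearMap.rank_le_domain _).trans_eq ?_)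
  rw [← Module.finrank_eq_rank, finrank_euclideanSpace_fin]

theorem rank_range_sum_blockTerm_le (k : ℕ) :
    Module.rank ℝ (LinearMap.range
      ((∑ j ∈ Finset.range k, blockTerm rX rY θ a j : X →L[ℝ] Y) : X →ₗ[ℝ] Y)) ≤
      blockOffset a k := by
  induction k with
  | zero =>
    rw [Finset.sum_range_zero, toLinearMap_zero, LinearMap.range_zero, rank_bot]
    exact zero_le
  | succ k ih =>
    rw [Finset.sum_range_succ, toLinearMap_add]
    calc _ ≤ _ + _ := LinearMap.rank_add_le _ _
      _ ≤ (blockOffset a k : Cardinal) + (a k + blockOffset a k + 1 : ℕ) :=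
        add_le_add ih (rank_range_blockTerm_le rX rY θ a k)
      _ = blockOffset a (k + 1) := by simp [blockOffset]

theorem proj_comp_blockTerm_comp_incl (k : ℕ) :
    (rY (a k + blockOffset a k)).proj.comp
        ((blockTerm rX rY θ a k).comp (rX (a k + blockOffset a k)).incl) =
      θ ^ k • .id ℝ _ := by
  simp only [blockTerm, smul_comp, comp_smul, ← comp_assoc, EuclideanRetract.proj_comp_incl,
    id_comp]

variable [CompleteSpace Y]

theorem summable_blockTerm (hθ₀ : 0 ≤ θ) (hθ₁ : θ < 1) : Summable (blockTerm rX rY θ a) :=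
  Summable.of_norm_bounded ((summable_geometric_of_lt_one hθ₀ hθ₁).mul_left (K ^ 2))
    (norm_blockTerm_le rX rY θ a hθ₀)

theorem isApproximable_blockSeries (hθ₀ : 0 ≤ θ) (hθ₁ : θ < 1) :
    IsApproximable (blockSeries rX rY θ a) :=
  mem_closure_of_tendsto (summable_blockTerm rX rY θ a hθ₀ hθ₁).hasSum.tendsto_sum_nat <|
    Eventually.of_forall fun k => Module.rank_lt_aleph0_iff.mp <|
      (rank_range_sum_blockTerm_le rX rY θ a k).trans_lt Cardinal.natCast_lt_aleph0

theorem norm_blockSeries_sub_sum_le (hθ₀ : 0 ≤ θ) (hθ₁ : θ < 1) (k : ℕ) :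
    ‖blockSeries rX rY θ a - ∑ j ∈ Finset.range k, blockTerm rX rY θ a j‖ ≤
      K ^ 2 * θ ^ k / (1 - θ) := by
  rw [norm_sub_rev]
  exact norm_sub_le_of_geometric_bound_of_hasSum hθ₁ (norm_blockTerm_le rX rY θ a hθ₀)
    (summable_blockTerm rX rY θ a hθ₀ hθ₁).hasSum k

theorem le_s_blockSeries (σ : SNumberScale) [CompleteSpace X] (hθ₀ : 0 ≤ θ) (hθ₁ : θ < 1)
    (k : ℕ) :
    θ ^ k - K ^ 4 * θ ^ (k + 1) / (1 - θ) ≤ K ^ 2 * σ.s X Y (blockSeries rX rY θ a) (a k) := by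
  set n := a k + blockOffset a k
  set T := blockSeries rX rY θ a
  set F := fun i => ∑ j ∈ Finset.range i, blockTerm rX rY θ a j
  have hK : 0 ≤ K := (opNorm_nonneg _).trans (rX n).norm_incl_le
  have hsT : σ.s X Y (T - F k) n ≤ σ.s X Y T (a k) := by
    rw [sub_eq_add_neg]
    refine σ.s_add_le_of_rank_le T _ ?_ (a k)
    rw [toLinearMap_neg, LinearMap.range_neg]
    exact rank_range_sum_blockTerm_le rX rY θ a k
  have hdiag : (rY n).proj.comp ((T - F k).comp (rX n).incl) - θ ^ k • .id ℝ _ =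
      (rY n).proj.comp ((T - F (k + 1)).comp (rX n).incl) := by
    rw [← proj_comp_blockTerm_comp_incl rX rY θ a k]
    simp only [F, Finset.sum_range_succ, sub_add_eq_sub_sub, sub_comp, comp_sub]
    rfl
  have htail : ‖(rY n).proj.comp ((T - F (k + 1)).comp (rX n).incl)‖ ≤
      K * (K ^ 2 * θ ^ (k + 1) / (1 - θ)) * K := by
    refine (opNorm_comp_le _ _).trans ?_
    rw [mul_assoc]
    exact mul_le_mul (rY n).norm_proj_le ((opNorm_comp_le _ _).trans (mul_le_mul
      (norm_blockSeries_sub_sum_le rX rY θ a hθ₀ hθ₁ (k + 1)) (rX n).norm_incl_le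
      (opNorm_nonneg _) (by have := sub_pos.2 hθ₁; positivity))) (by positivity) hK
  have hlow := σ.le_norm_mul_s_mul_norm_add n (T - F k) (rX n).incl (rY n).proj (θ ^ k)
  rw [hdiag] at hlow
  have hs := σ.nonneg X Y (T - F k) n
  have hfactor :
      ‖(rY n).proj‖ * σ.s X Y (T - F k) n * ‖(rX n).incl‖ ≤ K ^ 2 * σ.s X Y T (a k) :=
    calc _ ≤ K * σ.s X Y (T - F k) n * K := by
          gcongr
          · exact (rY n).norm_proj_le
          · exact (rX n).norm_incl_le
      _ ≤ K ^ 2 * σ.s X Y T (a k) := by nlinarith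
  have : K * (K ^ 2 * θ ^ (k + 1) / (1 - θ)) * K = K ^ 4 * θ ^ (k + 1) / (1 - θ) := by ring
  linarith

end BlockSeries

theorem exists_isApproximable_forall_le_s {X Y : Type} [NormedAddCommGroup X] [NormedSpace ℝ X]
    [CompleteSpace X] [NormedAddCommGroup Y] [NormedSpace ℝ Y] [CompleteSpace Y]
    (σ : SNumberScale) {K : ℝ} (hK : 0 < K) (rX : ∀ n, EuclideanRetract K X n)
    (rY : ∀ n, EuclideanRetract K Y n) :
    ∃ δ : ℕ → ℝ, (∀ k, 0 < δ k) ∧ ∀ a : ℕ → ℕ,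
      ∃ T : X →L[ℝ] Y, IsApproximable T ∧ ∀ k, δ k ≤ σ.s X Y T (a k) := by
  set θ := (2 * K ^ 4 + 1)⁻¹ with hθ
  have hθ₀ : 0 < θ := by positivity
  have hθ₁ : θ < 1 := inv_lt_one_of_one_lt₀ (by linarith [pow_pos hK 4])
  refine ⟨fun k => θ ^ k / (2 * K ^ 2), fun k => by positivity, fun a =>
    ⟨blockSeries rX rY θ a, isApproximable_blockSeries rX rY θ a hθ₀.le hθ₁, fun k => ?_⟩⟩
  -- θ is chosen so that the tail after block `k` costs exactly half of block `k`
  have hhalf : θ ^ k - K ^ 4 * θ ^ (k + 1) / (1 - θ) = θ ^ k / 2 := by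
    have : 1 - θ = 2 * K ^ 4 * θ := by rw [hθ]; field_simp; ring
    rw [this]
    field_simp
    ring
  have := le_s_blockSeries rX rY θ a σ hθ₀.le hθ₁ k
  rw [div_le_iff₀ (by positivity)]
  nlinarith

theorem stmt16_general (X Y : Type) [NormedAddCommGroup X] [NormedSpace ℝ X] [CompleteSpace X]
    [NormedAddCommGroup Y] [NormedSpace ℝ Y] [CompleteSpace Y]
    (C : ℝ) (hC : 1 ≤ C) (hX : UnifComplEuclidean C X) (hY : UnifComplEuclidean C Y)
    (σ : SNumberScale)
    (ε : ℕ → ℝ)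
    (hεlim : Filter.Tendsto ε Filter.atTop (nhds 0)) :
    ∃ T : X →L[ℝ] Y, IsApproximable T ∧
      ¬ ∃ K : ℝ, 0 < K ∧ ∀ n : ℕ, σ.s X Y T n ≤ K * ε n := by
  obtain ⟨δ, hδ, hT⟩ := exists_isApproximable_forall_le_s σ (by positivity : 0 < C * C)
    (fun n => (hX.nonempty_euclideanRetract hC n).some)
    (fun n => (hY.nonempty_euclideanRetract hC n).some)
  have hsmall : ∀ k : ℕ, ∃ a, |ε a| < δ k / (k + 1) := fun k => by
    obtain ⟨N, hN⟩ := Metric.tendsto_atTop.1 hεlim _ (div_pos (hδ k) k.cast_add_one_pos)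
    exact ⟨N, by simpa [Real.dist_eq] using hN N le_rfl⟩
  choose a ha using hsmall
  obtain ⟨T, hTA, hTs⟩ := hT a
  refine ⟨T, hTA, fun ⟨K, hK, hKs⟩ => ?_⟩
  obtain ⟨k, hk⟩ := exists_nat_ge K
  have hεa : K * ε (a k) < δ k :=
    calc K * ε (a k) ≤ (k + 1) * |ε (a k)| :=
          (mul_le_mul_of_nonneg_left (le_abs_self _) hK.le).trans
            (mul_le_mul_of_nonneg_right (by linarith) (abs_nonneg _))
      _ < δ k := (lt_div_iff₀' k.cast_add_one_pos).1 (ha k)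
  linarith [hKs (a k), hTs k]

/-- Let `X, Y` be Banach spaces admitting uniformly complemented
copies of `ℓ²_n` for each `n`. Then for every s-numbers sequence `s` and every
non-increasing positive null sequence `(ε_n)` there is an approximable operator
`T : X → Y` with `s_n(T) ≠ O(ε_n)`. -/
theorem stmt16 (X Y : Type) [NormedAddCommGroup X] [NormedSpace ℝ X] [CompleteSpace X]
    [NormedAddCommGroup Y] [NormedSpace ℝ Y] [CompleteSpace Y]
    (C : ℝ) (hC : 1 ≤ C) (hX : UnifComplEuclidean C X) (hY : UnifComplEuclidean C Y)
    (σ : SNumberScale)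
    (ε : ℕ → ℝ) (hεpos : ∀ n, 0 < ε n) (hεmono : ∀ n, ε (n + 1) ≤ ε n)
    (hεlim : Filter.Tendsto ε Filter.atTop (nhds 0)) :
    ∃ T : X →L[ℝ] Y, IsApproximable T ∧
      ¬ ∃ K : ℝ, 0 < K ∧ ∀ n : ℕ, σ.s X Y T n ≤ K * ε n :=
  stmt16_general X Y C hC hX hY σ ε hεlim
end
end
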